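/- arXiv:2001.07921 — 4 statements merged into one kernel-verified Lean document; each statement's English description precedes it below -/
import Mathlib

section
/- Let N ≥ 1 and d ≥ 2 be integers and D > 0. Then (1/√(2πd)) ∫_{D²(N+1)}^{dπ²(N+1)} e^{-x/8} (e·x/(4(d−1)))^{d−1} dx ≤ (4/√(2πd))·4^d·e^{-(N+1)D²/16}. -/
/-!
Writing `k = d - 1`, the inequality `e s ≤ eˢ` at `s = x / (16 k)` gives
`(e x / (4 k))^k ≤ 4^k e^{x/16}`, so the integrand is at most `4^k e^{-x/16}`. Integrating this
over `[D²(N+1), ∞)` gives `16 · 4^k e^{-D²(N+1)/16} = 4 · 4^d e^{-D²(N+1)/16}`; when the limits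
are reversed the integral of the nonnegative integrand is nonpositive.
-/

open Real Set MeasureTheory

theorem integral_exp_neg_div (a b : ℝ) {c : ℝ} (hc : c ≠ 0) :
    ∫ x in a..b, exp (-x / c) = c * (exp (-a / c) - exp (-b / c)) := by
  simp only [neg_div]
  rw [intervalIntegral.integral_comp_div (fun y => exp (-y)) hc,
    intervalIntegral.integral_comp_neg, integral_exp, smul_eq_mul]

theorem pow_exp_one_mul_div_le_exp (k : ℕ) {t : ℝ} (ht : 0 ≤ t) :
    (exp 1 * t / k) ^ k ≤ exp t := by
  rcases eq_or_ne k 0 with rfl | hk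
  · simpa using one_le_exp ht
  calc (exp 1 * t / k) ^ k = (exp 1 * (t / k)) ^ k := by rw [mul_div_assoc]
    _ ≤ exp (t / k) ^ k := by gcongr; exact exp_one_mul_le_exp
    _ = exp t := by rw [← exp_nat_mul]; field_simp

theorem intervalIntegral_le_mul_exp_neg_div {f : ℝ → ℝ} {a b c C : ℝ} (hc : 0 < c) (hC : 0 ≤ C)
    (hfi : IntervalIntegrable f volume a b) (hf_nonneg : ∀ x ∈ Icc b a, 0 ≤ f x)
    (hf_le : ∀ x ∈ Icc a b, f x ≤ C * exp (-x / c)) :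
    ∫ x in a..b, f x ≤ C * c * exp (-a / c) := by
  rcases le_or_gt a b with hab | hba
  · calc ∫ x in a..b, f x ≤ ∫ x in a..b, C * exp (-x / c) :=
          intervalIntegral.integral_mono_on hab hfi
          (Continuous.intervalIntegrable (by fun_prop) a b) hf_le
      _ = C * c * (exp (-a / c) - exp (-b / c)) := by
          rw [intervalIntegral.integral_const_mul, integral_exp_neg_div a b hc.ne', mul_assoc]
      _ ≤ C * c * exp (-a / c) := by gcongr; linarith [exp_pos (-b / c)]
  · calc ∫ x in a..b, f x = -∫ x in b..a, f x := intervalIntegral.integral_symm b a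
      _ ≤ 0 := neg_nonpos.2 (intervalIntegral.integral_nonneg hba.le hf_nonneg)
      _ ≤ C * c * exp (-a / c) := by positivity

theorem exp_neg_div_mul_pow_le (d : ℕ) (hd : 2 ≤ d) {x : ℝ} (hx : 0 ≤ x) :
    exp (-x / 8) * (exp 1 * x / (4 * ((d : ℝ) - 1))) ^ (d - 1) ≤ 4 ^ (d - 1) * exp (-x / 16) := by
  have hk : ((d - 1 : ℕ) : ℝ) = d - 1 := by push_cast [Nat.cast_sub (by omega : 1 ≤ d)]; ring
  have hsplit : exp 1 * x / (4 * ((d : ℝ) - 1)) = 4 * (exp 1 * (x / 16) / (d - 1 : ℕ)) := by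
    rw [hk]; field_simp; ring
  calc exp (-x / 8) * (exp 1 * x / (4 * ((d : ℝ) - 1))) ^ (d - 1)
      = exp (-x / 8) * 4 ^ (d - 1) * (exp 1 * (x / 16) / (d - 1 : ℕ)) ^ (d - 1) := by
        rw [hsplit, mul_pow, mul_assoc]
    _ ≤ exp (-x / 8) * 4 ^ (d - 1) * exp (x / 16) := by
        gcongr; exact pow_exp_one_mul_div_le_exp _ (by positivity)
    _ = 4 ^ (d - 1) * exp (-x / 16) := by
        rw [mul_comm (exp _), mul_assoc, ← exp_add]; ring_nf

theorem integral_bound_general (N d : ℕ) (hd : 2 ≤ d) (D : ℝ) :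
    (1 / Real.sqrt (2 * Real.pi * d)) *
      ∫ x in (D ^ 2 * ((N : ℝ) + 1))..((d : ℝ) * Real.pi ^ 2 * ((N : ℝ) + 1)),
        Real.exp (-x / 8) * (Real.exp 1 * x / (4 * ((d : ℝ) - 1))) ^ (d - 1) ≤
    (4 / Real.sqrt (2 * Real.pi * d)) * 4 ^ d * Real.exp (-((N : ℝ) + 1) * D ^ 2 / 16) := by
  have hd1 : (0 : ℝ) ≤ d - 1 := sub_nonneg.2 (by exact_mod_cast (by omega : 1 ≤ d))
  have hintegral := intervalIntegral_le_mul_exp_neg_div (f := fun x =>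
      exp (-x / 8) * (exp 1 * x / (4 * ((d : ℝ) - 1))) ^ (d - 1))
    (a := D ^ 2 * ((N : ℝ) + 1)) (b := d * π ^ 2 * ((N : ℝ) + 1)) (C := 4 ^ (d - 1))
    (by norm_num : (0 : ℝ) < 16) (by positivity) (Continuous.intervalIntegrable (by fun_prop) _ _)
    (fun x hx => by
      have : 0 ≤ x := le_trans (by positivity) hx.1
      positivity)
    (fun x hx => exp_neg_div_mul_pow_le d hd (le_trans (by positivity) hx.1))
  have h4 : (4 : ℝ) ^ (d - 1) * 16 = 4 * 4 ^ d := by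
    rw [mul_comm, show (16 : ℝ) = 4 * 4 by norm_num, mul_assoc, ← pow_succ',
      Nat.sub_add_cancel (by omega)]
  calc _ ≤ 1 / √(2 * π * d) * (4 ^ (d - 1) * 16 * exp (-(D ^ 2 * ((N : ℝ) + 1)) / 16)) := by
        gcongr
    _ = _ := by rw [h4]; ring_nf

theorem integral_bound (N d : ℕ) (hN : 1 ≤ N) (hd : 2 ≤ d) (D : ℝ) (hD : 0 < D) :
    (1 / Real.sqrt (2 * Real.pi * d)) *
      ∫ x in (D ^ 2 * ((N : ℝ) + 1))..((d : ℝ) * Real.pi ^ 2 * ((N : ℝ) + 1)),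
        Real.exp (-x / 8) * (Real.exp 1 * x / (4 * ((d : ℝ) - 1))) ^ (d - 1) ≤
    (4 / Real.sqrt (2 * Real.pi * d)) * 4 ^ d * Real.exp (-((N : ℝ) + 1) * D ^ 2 / 16) :=
  integral_bound_general N d hd D
end

section
/- Let H be a Hilbert space, S : H → H a bounded operator, and for α ∈ ℝ let W_α be a family of bounded invertible self-adjoint positive operators (multiplication by e^{αρ}) with W_0 = I, depending differentiably on α with derivative W_α' = ρ·W_α where ρ is a bounded self-adjoint operator. If for all |α| < c one has ‖W_{-α}[S, ρ]W_α‖ ≤ K and ‖W_α[S,ρ]W_{-α}‖ ≤ K, then for all |α| < c, ‖W_{-α}[S, W_{2α}]W_{-α}‖ ≤ 2K|α|. -/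
theorem weighted_commutator_deriv_bound
    {H : Type*} [NormedAddCommGroup H] [InnerProductSpace ℂ H] [CompleteSpace H]
    (S ρ : H →L[ℂ] H) (hρ : IsSelfAdjoint ρ)
    (W : ℝ → (H →L[ℂ] H))
    (hW0 : W 0 = 1)
    (hWgrp : ∀ α β : ℝ, W α * W β = W (α + β))
    (hWsa : ∀ α : ℝ, IsSelfAdjoint (W α))
    (hWderiv : ∀ α : ℝ, HasDerivAt W (ρ * W α) α)
    (hWcomm : ∀ α : ℝ, ρ * W α = W α * ρ)
    (c K : ℝ) (hc : 0 < c) (hK : 0 ≤ K)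
    (hbound₁ : ∀ α : ℝ, |α| < c → ‖W (-α) * (S * ρ - ρ * S) * W α‖ ≤ K)
    (hbound₂ : ∀ α : ℝ, |α| < c → ‖W α * (S * ρ - ρ * S) * W (-α)‖ ≤ K) :
    ∀ α : ℝ, |α| < c →
      ‖W (-α) * (S * W (2 * α) - W (2 * α) * S) * W (-α)‖ ≤ 2 * K * |α| := by
  intro α hα
  set f : ℝ → (H →L[ℂ] H) := fun t => W (-t) * S * W t - W t * S * W (-t) with hf
  set g : ℝ → (H →L[ℂ] H) := fun t =>
    W (-t) * (S * ρ - ρ * S) * W t + W t * (S * ρ - ρ * S) * W (-t) with hg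
  -- derivative of f
  have hderiv : ∀ β : ℝ, HasDerivAt f (g β) β := by
    intro β
    have hWneg : HasDerivAt (fun t : ℝ => W (-t)) (-(ρ * W (-β))) β := by
      have := (hWderiv (-β)).scomp β (hasDerivAt_neg β)
      simp at this; exact this
    have h1 : HasDerivAt (fun t : ℝ => W (-t) * S * W t)
        ((-(ρ * W (-β)) * S) * W β + (W (-β) * S) * (ρ * W β)) β :=
      (hWneg.mul_const S).mul (hWderiv β)
    have h2 : HasDerivAt (fun t : ℝ => W t * S * W (-t))
        (((ρ * W β) * S) * W (-β) + (W β * S) * (-(ρ * W (-β)))) β :=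
      ((hWderiv β).mul_const S).mul hWneg
    have hD := h1.sub h2
    have e1 : (-(ρ * W (-β)) * S) * W β + (W (-β) * S) * (ρ * W β)
        = W (-β) * (S * ρ - ρ * S) * W β := by
      rw [hWcomm (-β)]; noncomm_ring
    have e2 : ((ρ * W β) * S) * W (-β) + (W β * S) * (-(ρ * W (-β)))
        = -(W β * (S * ρ - ρ * S) * W (-β)) := by
      rw [hWcomm β]; noncomm_ring
    have : (-(ρ * W (-β)) * S) * W β + (W (-β) * S) * (ρ * W β)
        - (((ρ * W β) * S) * W (-β) + (W β * S) * (-(ρ * W (-β)))) = g β := by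
      rw [e1, e2, hg]; abel
    rw [this] at hD
    exact hD
  -- bound on the derivative on the ball
  have hball : Convex ℝ (Metric.ball (0 : ℝ) c) := convex_ball 0 c
  have hmem₀ : (0 : ℝ) ∈ Metric.ball (0 : ℝ) c := by simpa using hc
  have hmemα : α ∈ Metric.ball (0 : ℝ) c := by simpa [Real.dist_eq] using hα
  have hbound : ∀ x ∈ Metric.ball (0 : ℝ) c, ‖g x‖ ≤ 2 * K := by
    intro x hx
    have hx' : |x| < c := by simpa [Real.dist_eq] using hx
    calc ‖g x‖ ≤ ‖W (-x) * (S * ρ - ρ * S) * W x‖ + ‖W x * (S * ρ - ρ * S) * W (-x)‖ :=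
          norm_add_le _ _
      _ ≤ K + K := add_le_add (hbound₁ x hx') (hbound₂ x hx')
      _ = 2 * K := by ring
  have hmvt := hball.norm_image_sub_le_of_norm_hasDerivWithin_le
    (fun x hx => (hderiv x).hasDerivWithinAt) hbound hmem₀ hmemα
  have hf0 : f 0 = 0 := by simp [hf, hW0]
  rw [hf0, sub_zero, sub_zero, Real.norm_eq_abs] at hmvt
  -- identify the goal expression with f α
  have hA : W (2 * α) * W (-α) = W α := by
    rw [hWgrp]; congr 1; ring
  have hB : W (-α) * W (2 * α) = W α := by
    rw [hWgrp]; congr 1; ring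
  have hgoal : W (-α) * (S * W (2 * α) - W (2 * α) * S) * W (-α) = f α := by
    have : W (-α) * (S * W (2 * α) - W (2 * α) * S) * W (-α)
        = W (-α) * S * (W (2 * α) * W (-α)) - (W (-α) * W (2 * α)) * (S * W (-α)) := by
      noncomm_ring
    rw [this, hA, hB, hf]
    noncomm_ring
  rw [hgoal]
  calc ‖f α‖ ≤ 2 * K * |α| := hmvt
end

section
/- Let S be an orthogonal projection on a Hilbert space H, f a bounded self-adjoint operator, and u ∈ ran(S) a unit vector with S f S u = λ u for λ ∈ ℝ. Then for any bounded invertible positive operator E = e^{αρ} (with ρ bounded self-adjoint commuting with f), ⟨E(f−λ)u, Eu⟩ = ⟨[S, E²][f, S]u, u⟩. -/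
theorem weighted_commutator_identity
    {H : Type*} [NormedAddCommGroup H] [InnerProductSpace ℂ H] [CompleteSpace H]
    (S f E : H →L[ℂ] H)
    (hSproj : S * S = S) (hSsa : IsSelfAdjoint S)
    (hfsa : IsSelfAdjoint f) (hEsa : IsSelfAdjoint E)
    (hEf : E * f = f * E)
    (u : H) (hu : ‖u‖ = 1) (hSu : S u = u)
    (lam : ℝ) (heig : S (f u) = (lam : ℂ) • u) :
    (inner ℂ (E ((f - (lam : ℂ) • 1) u)) (E u) : ℂ) =
      inner ℂ (((S * (E * E) - (E * E) * S) * (f * S - S * f)) u) u := by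
  set g := f - (lam : ℂ) • 1 with hg
  have hgu : S (g u) = 0 := by
    simp [hg, ContinuousLinearMap.sub_apply, ContinuousLinearMap.smul_apply,
      ContinuousLinearMap.one_apply, map_sub, map_smul, heig, hSu]
  have hfS : (f * S - S * f) u = g u := by
    simp [hg, ContinuousLinearMap.mul_apply, ContinuousLinearMap.sub_apply,
      ContinuousLinearMap.smul_apply, ContinuousLinearMap.one_apply, hSu, heig]
  rw [ContinuousLinearMap.mul_apply, hfS]
  simp only [ContinuousLinearMap.sub_apply, ContinuousLinearMap.mul_apply, hgu,
    map_zero, sub_zero]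
  have hSym := hSsa.isSymmetric
  have hEsym := hEsa.isSymmetric
  calc (inner ℂ (E (g u)) (E u) : ℂ)
      = inner ℂ (g u) (E (E u)) := hEsym (g u) (E u)
    _ = inner ℂ (E (g u)) (E u) := (hEsym (g u) (E u)).symm
    _ = inner ℂ (E (E (g u))) u := (hEsym (E (g u)) u).symm
    _ = inner ℂ (E (E (g u))) (S u) := by rw [hSu]
    _ = inner ℂ (S (E (E (g u)))) u := (hSym (E (E (g u))) u).symm ▸ rfl
end

section
/- Let S be an orthogonal projection, f a bounded self-adjoint operator, u a unit vector with Su = u and S(fu) = λu, and suppose the weighted commutator bounds ‖E^{-1}[S, E²]E^{-1}‖ ≤ K₁ and ‖E[f,S]E^{-1}‖ ≤ K₂ hold for E = e^{αρ} a positive invertible operator commuting with f. Then ⟨E(f−λ)u, Eu⟩ ≤ K₁K₂‖Eu‖², i.e., the weighted quadratic form inequality ∫ e^{2αρ}(f − λ − K₁K₂)|u|² ≤ 0 holds in the abstract sense ⟨E(f − λ − K₁K₂)u, Eu⟩ ≤ 0. -/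
theorem weighted_quadratic_form_bound
    {H : Type*} [NormedAddCommGroup H] [InnerProductSpace ℂ H] [CompleteSpace H]
    (S f E Einv : H →L[ℂ] H)
    (hSproj : S * S = S) (hSsa : IsSelfAdjoint S)
    (hfsa : IsSelfAdjoint f) (hEsa : IsSelfAdjoint E)
    (hEf : E * f = f * E)
    (hEinv₁ : E * Einv = 1) (hEinv₂ : Einv * E = 1)
    (u : H) (hu : ‖u‖ = 1) (hSu : S u = u)
    (lam : ℝ) (heig : S (f u) = (lam : ℂ) • u)
    (K₁ K₂ : ℝ) (hK₁ : 0 ≤ K₁) (hK₂ : 0 ≤ K₂)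
    (hb₁ : ‖Einv * (S * (E * E) - (E * E) * S) * Einv‖ ≤ K₁)
    (hb₂ : ‖E * (f * S - S * f) * Einv‖ ≤ K₂) :
    (inner ℂ (E ((f - (lam : ℂ) • 1) u)) (E u) : ℂ).re ≤ K₁ * K₂ * ‖E u‖ ^ 2 := by
  have inner_move : ∀ (T : H →L[ℂ] H), IsSelfAdjoint T → ∀ x y : H,
      (inner ℂ (T x) y : ℂ) = inner ℂ x (T y) := by
    intro T hT x y
    nth_rewrite 1 [← hT.adjoint_eq]
    exact ContinuousLinearMap.adjoint_inner_left T y x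
  set w : H := f u - (lam : ℂ) • u with hw
  have hSw : S w = 0 := by
    simp [hw, map_sub, heig, hSu, map_smul]
  set A := Einv * (S * (E * E) - (E * E) * S) * Einv with hA
  set B := E * (f * S - S * f) * Einv with hB
  have hEinvE : ∀ x, Einv (E x) = x := fun x => by
    have := congrArg (fun T : H →L[ℂ] H => T x) hEinv₂; simpa using this
  have hBEu : B (E u) = E w := by
    simp only [hB, ContinuousLinearMap.mul_apply, hEinvE,
      ContinuousLinearMap.sub_apply, hSu, heig, hw, map_sub]
  have hABEu : A (B (E u)) = Einv (S (E (E w))) := by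
    rw [hBEu]
    simp only [hA, ContinuousLinearMap.mul_apply, hEinvE,
      ContinuousLinearMap.sub_apply, hSw]
    simp
  have hEinvsa : IsSelfAdjoint Einv := by
    have h1 : star Einv * E = 1 := by
      have := congrArg star hEinv₁
      simpa [star_mul, hEsa.star_eq] using this
    calc star Einv = star Einv * (E * Einv) := by rw [hEinv₁, mul_one]
      _ = (star Einv * E) * Einv := by rw [mul_assoc]
      _ = Einv := by rw [h1, one_mul]
  have h0 : (f - (lam:ℂ) • 1) u = w := by
    simp [hw, ContinuousLinearMap.sub_apply, ContinuousLinearMap.smul_apply]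
  have key : (inner ℂ (E ((f - (lam:ℂ) • 1) u)) (E u) : ℂ)
      = inner ℂ (A (B (E u))) (E u) := by
    rw [h0, hABEu, inner_move Einv hEinvsa, hEinvE, inner_move S hSsa, hSu,
      inner_move E hEsa (E w) u]
  rw [key]
  have h1 : (inner ℂ (A (B (E u))) (E u) : ℂ).re ≤ ‖A (B (E u))‖ * ‖E u‖ :=
    (Complex.re_le_norm _).trans ((norm_inner_le_norm _ _))
  have h2 : ‖B (E u)‖ ≤ K₂ * ‖E u‖ :=
    (B.le_opNorm _).trans (mul_le_mul_of_nonneg_right hb₂ (norm_nonneg _))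
  have h3 : ‖A (B (E u))‖ ≤ K₁ * (K₂ * ‖E u‖) :=
    (A.le_opNorm _).trans (mul_le_mul hb₁ h2 (norm_nonneg _) hK₁)
  have h4 : (0:ℝ) ≤ ‖E u‖ := norm_nonneg _
  nlinarith [h1, h3, mul_le_mul_of_nonneg_right h3 h4]
end
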